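/- arXiv:1701.02514 — 5 statements merged into one kernel-verified Lean document; each statement's English description precedes it below -/
import Mathlib

section
/- Let m ≥ 1. Let H : ℝ → Matrix (Fin m) (Fin m) ℝ be differentiable with H(t) invertible for all t and H'(t) = H(t) · V(t), and let H_C : ℝ → Matrix (Fin m) (Fin m) ℝ be differentiable with H_C'(t) = H(t) · U(t) · H(t)⁻¹ · H_C(t), where U, V : ℝ → Matrix (Fin m) (Fin m) ℝ. Then the relative pose K(t) := H(t)⁻¹ · H_C(t) satisfies K'(t) = (U(t) − V(t)) · K(t) for every t. -/
open Matrix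

attribute [local instance] Matrix.normedAddCommGroup Matrix.normedSpace

noncomputable section

/-- The `3 × 3` skew-symmetric matrix associated with the cross product: `hat3 w * x = w × x`. -/
def hat3 (w : Fin 3 → ℝ) : Matrix (Fin 3) (Fin 3) ℝ :=
  !![0, -w 2, w 1; w 2, 0, -w 0; -w 1, w 0, 0]

/-- The `se(3)` hat map of `V = (u, ω) ∈ ℝ⁶`: top-left block `ω^∧`, top-right block `u`,
last row zero. -/
def hat4 (V : (Fin 3 → ℝ) × (Fin 3 → ℝ)) : Matrix (Fin 4) (Fin 4) ℝ :=
  !![0, -(V.2 2), V.2 1, V.1 0;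
     V.2 2, 0, -(V.2 0), V.1 1;
     -(V.2 1), V.2 0, 0, V.1 2;
     0, 0, 0, 0]

/-- The 6D spatial cross product: `(u₁, ω₁) ×₆ (u₂, ω₂) = (ω₁ × u₂ + u₁ × ω₂, ω₁ × ω₂)`. -/
def cross6 (V W : (Fin 3 → ℝ) × (Fin 3 → ℝ)) : (Fin 3 → ℝ) × (Fin 3 → ℝ) :=
  (crossProduct V.2 W.1 + crossProduct V.1 W.2, crossProduct V.2 W.2)

/-- The homogeneous `4 × 4` matrix `[R, o; 0 0 0 1]`. -/
def homog (R : Matrix (Fin 3) (Fin 3) ℝ) (o : Fin 3 → ℝ) : Matrix (Fin 4) (Fin 4) ℝ :=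
  !![R 0 0, R 0 1, R 0 2, o 0;
     R 1 0, R 1 1, R 1 2, o 1;
     R 2 0, R 2 1, R 2 2, o 2;
     0, 0, 0, 1]

/-- The set of rigid transformation matrices `[R, o; 0 0 0 1]` with `R` a rotation matrix. -/
def SE3 : Set (Matrix (Fin 4) (Fin 4) ℝ) :=
  {H | ∃ (R : Matrix (Fin 3) (Fin 3) ℝ) (o : Fin 3 → ℝ),
    Rᵀ * R = 1 ∧ R.det = 1 ∧ H = homog R o}

section Aux

variable {m : ℕ}

lemma matrix_hasDerivAt_iff {A : ℝ → Matrix (Fin m) (Fin m) ℝ}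
    {A' : Matrix (Fin m) (Fin m) ℝ} {t : ℝ} :
    HasDerivAt A A' t ↔ ∀ i j, HasDerivAt (fun τ => A τ i j) (A' i j) t := by
  exact (hasDerivAt_pi (φ := A)).trans (forall_congr' fun i => hasDerivAt_pi)

lemma matrix_entry_differentiable {A : ℝ → Matrix (Fin m) (Fin m) ℝ}
    (hA : Differentiable ℝ A) (i j : Fin m) :
    Differentiable ℝ (fun τ => A τ i j) :=
  differentiable_pi.mp (differentiable_pi.mp hA i) j

/-- Product rule for matrix-valued functions of a real variable. -/
lemma matrix_hasDerivAt_mul {A B : ℝ → Matrix (Fin m) (Fin m) ℝ}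
    {A' B' : Matrix (Fin m) (Fin m) ℝ} {t : ℝ}
    (hA : HasDerivAt A A' t) (hB : HasDerivAt B B' t) :
    HasDerivAt (fun τ => A τ * B τ) (A' * B t + A t * B') t := by
  rw [matrix_hasDerivAt_iff] at hA hB ⊢
  intro i j
  have : ∀ τ, (A τ * B τ) i j = ∑ k, A τ i k * B τ k j := fun τ => Matrix.mul_apply
  simp only [this]
  have h : HasDerivAt (fun τ => ∑ k, A τ i k * B τ k j)
      (∑ k, (A' i k * B t k j + A t i k * B' k j)) t :=
    HasDerivAt.fun_sum fun k _ => (hA i k).mul (hB k j)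
  convert h using 1
  rw [Finset.sum_add_distrib]
  simp [Matrix.add_apply, Matrix.mul_apply]

lemma matrix_differentiable_mul {A B : ℝ → Matrix (Fin m) (Fin m) ℝ}
    (hA : Differentiable ℝ A) (hB : Differentiable ℝ B) :
    Differentiable ℝ (fun τ => A τ * B τ) := fun t =>
  (matrix_hasDerivAt_mul (hA t).hasDerivAt (hB t).hasDerivAt).differentiableAt

lemma matrix_det_differentiable {A : ℝ → Matrix (Fin m) (Fin m) ℝ}
    (hA : Differentiable ℝ A) :
    Differentiable ℝ (fun τ => (A τ).det) := by
  have : ∀ τ, (A τ).det =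
      ∑ σ : Equiv.Perm (Fin m), (Equiv.Perm.sign σ : ℤ) * ∏ i, A τ (σ i) i := by
    intro τ; rw [Matrix.det_apply']
  simp only [this]
  exact Differentiable.fun_sum fun σ _ => (Differentiable.fun_finsetProd
    fun i _ => matrix_entry_differentiable hA (σ i) i).const_mul _

lemma matrix_inv_differentiable {A : ℝ → Matrix (Fin m) (Fin m) ℝ}
    (hA : Differentiable ℝ A) (hAinv : ∀ t, IsUnit (A t)) :
    Differentiable ℝ (fun τ => (A τ)⁻¹) := by
  have hdet : ∀ t, (A t).det ≠ 0 := fun t =>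
    ((Matrix.isUnit_iff_isUnit_det (A t)).mp (hAinv t)).ne_zero
  have hadj : Differentiable ℝ (fun τ => (A τ).adjugate) := by
    refine differentiable_pi.mpr fun i => ?_
    refine differentiable_pi.mpr fun j => ?_
    have h1 : ∀ τ, (A τ).adjugate i j =
        ((A τ).updateRow j (Pi.single i 1)).det := fun τ => Matrix.adjugate_apply _ i j
    simp only [h1]
    apply matrix_det_differentiable
    refine differentiable_pi.mpr fun a => ?_
    refine differentiable_pi.mpr fun b => ?_
    by_cases hab : a = j
    · subst hab
      simp only [Matrix.updateRow_self]
      exact differentiable_const _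
    · simp only [Matrix.updateRow_ne hab]
      exact matrix_entry_differentiable hA a b
  have : ∀ τ, (A τ)⁻¹ = ((A τ).det)⁻¹ • (A τ).adjugate := by
    intro τ; rw [Matrix.inv_def, Ring.inverse_eq_inv']
  simp only [this]
  exact Differentiable.smul ((matrix_det_differentiable hA).inv hdet) hadj

end Aux

/-- **Evolution of the relative pose of the centroidal frame (STATEMENT 6).**
If `H' = H V` with `H` invertible and `H_C' = H U H⁻¹ H_C`, then the relative pose
`K = H⁻¹ H_C` satisfies `K' = (U − V) K`. -/
theorem relative_pose_ode (m : ℕ) (hm : 1 ≤ m)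
    (H H_C U V : ℝ → Matrix (Fin m) (Fin m) ℝ)
    (hH : Differentiable ℝ H) (hHinv : ∀ t, IsUnit (H t))
    (hHV : ∀ t, deriv H t = H t * V t)
    (hHC : Differentiable ℝ H_C)
    (hHCU : ∀ t, deriv H_C t = H t * U t * (H t)⁻¹ * H_C t) :
    ∀ t : ℝ,
      deriv (fun τ => (H τ)⁻¹ * H_C τ) t =
        (U t - V t) * ((H t)⁻¹ * H_C t) := by
  intro t
  set K : ℝ → Matrix (Fin m) (Fin m) ℝ := fun τ => (H τ)⁻¹ * H_C τ with hKdef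
  have hKdiff : Differentiable ℝ K :=
    matrix_differentiable_mul (matrix_inv_differentiable hH hHinv) hHC
  have hK : HasDerivAt K (deriv K t) t := (hKdiff t).hasDerivAt
  have hHd : HasDerivAt H (H t * V t) t := by
    have := (hH t).hasDerivAt
    rw [← hHV t]; exact this
  -- H * K = H_C
  have hHK : ∀ τ, H τ * K τ = H_C τ := by
    intro τ
    rw [hKdef, ← Matrix.mul_assoc, Matrix.mul_nonsing_inv _
      ((Matrix.isUnit_iff_isUnit_det (H τ)).mp (hHinv τ)), Matrix.one_mul]
  have hprod : HasDerivAt H_C (H t * V t * K t + H t * deriv K t) t := by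
    have := matrix_hasDerivAt_mul hHd hK
    simpa only [funext hHK] using this
  have hHCd : HasDerivAt H_C (H t * U t * (H t)⁻¹ * H_C t) t := by
    have := (hHC t).hasDerivAt
    rw [← hHCU t]; exact this
  have heq : H t * V t * K t + H t * deriv K t = H t * U t * (H t)⁻¹ * H_C t :=
    hprod.unique hHCd
  have hcancel : H t * deriv K t = H t * ((U t - V t) * K t) := by
    have : H t * deriv K t = H t * U t * (H t)⁻¹ * H_C t - H t * V t * K t := by
      rw [← heq]; noncomm_ring
    rw [this, hKdef]
    noncomm_ring
  have hdet := (Matrix.isUnit_iff_isUnit_det (H t)).mp (hHinv t)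
  calc deriv K t = (H t)⁻¹ * (H t * deriv K t) := by
        rw [← Matrix.mul_assoc, Matrix.nonsing_inv_mul _ hdet, Matrix.one_mul]
    _ = (H t)⁻¹ * (H t * ((U t - V t) * K t)) := by rw [hcancel]
    _ = (U t - V t) * ((H t)⁻¹ * H_C t) := by
        rw [← Matrix.mul_assoc, Matrix.nonsing_inv_mul _ hdet, Matrix.one_mul, hKdef]
end
end

section
/- Let n ≥ 1. Let H : ℝ → Matrix (Fin 4) (Fin 4) ℝ be continuously differentiable with H(t) invertible for all t and H'(t) = H(t) · W(t) for a continuous W : ℝ → Matrix (Fin 4) (Fin 4) ℝ. Let F : ℝⁿ → Matrix (Fin 4) (Fin 4) ℝ be continuously differentiable with F(s) invertible for all s and ∂F/∂s_i(s) = A_i(s) · F(s) for continuous maps A_i : ℝⁿ → Matrix (Fin 4) (Fin 4) ℝ, i ∈ {1,…,n}. Let s : ℝ → ℝⁿ be continuously differentiable, fix t₀ ∈ ℝ, and let H_C : ℝ → Matrix (Fin 4) (Fin 4) ℝ be differentiable with H_C(t₀) = H(t₀) · F(s(t₀)) and H_C'(t) = H(t) · (W(t) + Σ_{i=1}^{n}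 s_i'(t) A_i(s(t))) · H(t)⁻¹ · H_C(t) for all t. Then H_C(t) = H(t) · F(s(t)) for every t ∈ ℝ. -/
open Matrix

attribute [local instance] Matrix.normedAddCommGroup Matrix.normedSpace

noncomputable section

open Set

lemma norm_mul_le₄ (M N : Matrix (Fin 4) (Fin 4) ℝ) : ‖M * N‖ ≤ 4 * ‖M‖ * ‖N‖ := by
  have h0 : (0:ℝ) ≤ 4 * ‖M‖ * ‖N‖ := by positivity
  rw [Matrix.norm_le_iff h0]
  intro i j
  rw [Matrix.mul_apply]
  calc ‖∑ k, M i k * N k j‖ ≤ ∑ k : Fin 4, ‖M i k * N k j‖ := norm_sum_le _ _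
    _ ≤ ∑ _k : Fin 4, ‖M‖ * ‖N‖ := Finset.sum_le_sum fun k _ => by
        rw [norm_mul]
        exact mul_le_mul (Matrix.norm_entry_le_entrywise_sup_norm M)
          (Matrix.norm_entry_le_entrywise_sup_norm N) (norm_nonneg _) (norm_nonneg _)
    _ = 4 * ‖M‖ * ‖N‖ := by
        simp [Finset.sum_const]; ring

lemma isBoundedBilinearMap_mul4 :
    IsBoundedBilinearMap ℝ
      (fun p : Matrix (Fin 4) (Fin 4) ℝ × Matrix (Fin 4) (Fin 4) ℝ => p.1 * p.2) where
  add_left _ _ _ := add_mul _ _ _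
  smul_left c x y := smul_mul_assoc c x y
  add_right _ _ _ := mul_add _ _ _
  smul_right c x y := mul_smul_comm c x y
  bound := ⟨4, by norm_num, fun x y => norm_mul_le₄ x y⟩

lemma HasDerivAt.mul4 {f g : ℝ → Matrix (Fin 4) (Fin 4) ℝ}
    {f' g' : Matrix (Fin 4) (Fin 4) ℝ} {t : ℝ}
    (hf : HasDerivAt f f' t) (hg : HasDerivAt g g' t) :
    HasDerivAt (fun τ => f τ * g τ) (f t * g' + f' * g t) t := by
  have := (isBoundedBilinearMap_mul4.hasFDerivAt (f t, g t)).comp_hasDerivAt t (hf.prodMk hg)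
  simp at this
  exact this

lemma linear_ODE_unique (M : ℝ → Matrix (Fin 4) (Fin 4) ℝ) (hM : Continuous M)
    (f g : ℝ → Matrix (Fin 4) (Fin 4) ℝ) (t₀ : ℝ)
    (hf : ∀ t, HasDerivAt f (M t * f t) t) (hg : ∀ t, HasDerivAt g (M t * g t) t)
    (h₀ : f t₀ = g t₀) : ∀ t, f t = g t := by
  intro t1
  set a : ℝ := min t₀ t1 - 1 with ha
  set b : ℝ := max t₀ t1 + 1 with hb
  have hab : a ≤ b := by
    have := min_le_max (a := t₀) (b := t1); simp only [ha, hb]; linarith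
  have ht₀ : t₀ ∈ Ioo a b := by
    constructor
    · have := min_le_left t₀ t1; simp only [ha]; linarith
    · have := le_max_left t₀ t1; simp only [hb]; linarith
  have ht1 : t1 ∈ Ioo a b := by
    constructor
    · have := min_le_right t₀ t1; simp only [ha]; linarith
    · have := le_max_right t₀ t1; simp only [hb]; linarith
  -- clamp
  set cl : ℝ → ℝ := fun τ => max a (min τ b) with hcl
  have hclmem : ∀ τ, cl τ ∈ Icc a b := fun τ =>
    ⟨le_max_left _ _, max_le hab (min_le_right _ _)⟩
  have hcleq : ∀ τ ∈ Ioo a b, cl τ = τ := by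
    intro τ hτ
    simp only [hcl]
    rw [min_eq_left hτ.2.le, max_eq_right hτ.1.le]
  obtain ⟨C, hC⟩ := isCompact_Icc.exists_bound_of_continuousOn (hM.continuousOn (s := Icc a b))
  set C' : ℝ := max C 0 with hC'
  have hC'0 : (0:ℝ) ≤ C' := le_max_right _ _
  set K : NNReal := Real.toNNReal (4 * C') with hK
  have hKcoe : (K : ℝ) = 4 * C' := Real.coe_toNNReal _ (by positivity)
  set v : ℝ → Matrix (Fin 4) (Fin 4) ℝ → Matrix (Fin 4) (Fin 4) ℝ :=
    fun τ x => M (cl τ) * x with hv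
  have hlip : ∀ τ, LipschitzOnWith K (v τ) univ := by
    intro τ
    apply LipschitzWith.lipschitzOnWith
    apply LipschitzWith.of_dist_le_mul
    intro x y
    have h1 : v τ x - v τ y = M (cl τ) * (x - y) := by
      simp [hv, Matrix.mul_sub]
    rw [dist_eq_norm, dist_eq_norm, h1, hKcoe]
    calc ‖M (cl τ) * (x - y)‖ ≤ 4 * ‖M (cl τ)‖ * ‖x - y‖ := norm_mul_le₄ _ _
      _ ≤ 4 * C' * ‖x - y‖ := by
          have h2 : ‖M (cl τ)‖ ≤ C' := le_trans (hC _ (hclmem τ)) (le_max_left _ _)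
          have := norm_nonneg (x - y)
          nlinarith [norm_nonneg (M (cl τ))]
  have key := ODE_solution_unique_of_mem_Ioo (v := v) (s := fun _ => (univ : Set (Matrix (Fin 4) (Fin 4) ℝ))) (fun τ _ => hlip τ) ht₀
    (f := f) (g := g) ?_ ?_ h₀
  · exact key ht1
  · intro τ hτ
    refine ⟨?_, trivial⟩
    have := hf τ
    simp [hv, hcleq τ hτ]
    exact this
  · intro τ hτ
    refine ⟨?_, trivial⟩
    have := hg τ
    simp [hv, hcleq τ hτ]
    exact this

/-- **Configuration dependence of the centroidal frame (STATEMENT 7).**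
If the coefficient maps `A_i` are the right-trivialized partial derivatives of
`F`, then the centroidal frame `H_C` obtained by integrating the right-trivialized
locked velocity with `H_C(t₀) = H(t₀) F(s(t₀))` satisfies `H_C(t) = H(t) F(s(t))`
for all `t`. -/
theorem centroidal_frame_integrable (n : ℕ) (hn : 1 ≤ n)
    (H W : ℝ → Matrix (Fin 4) (Fin 4) ℝ)
    (hH : ContDiff ℝ 1 H) (hHinv : ∀ t, IsUnit (H t))
    (hW : Continuous W) (hHW : ∀ t, deriv H t = H t * W t)
    (F : (Fin n → ℝ) → Matrix (Fin 4) (Fin 4) ℝ)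
    (hF : ContDiff ℝ 1 F) (hFinv : ∀ s, IsUnit (F s))
    (A : Fin n → (Fin n → ℝ) → Matrix (Fin 4) (Fin 4) ℝ)
    (hAc : ∀ i, Continuous (A i))
    (hFA : ∀ (s : Fin n → ℝ) (i : Fin n),
      fderiv ℝ F s (Pi.single i 1) = A i s * F s)
    (s : ℝ → Fin n → ℝ) (hs : ContDiff ℝ 1 s)
    (t₀ : ℝ)
    (H_C : ℝ → Matrix (Fin 4) (Fin 4) ℝ)
    (hHC : Differentiable ℝ H_C)
    (hHC₀ : H_C t₀ = H t₀ * F (s t₀))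
    (hHCode : ∀ t, deriv H_C t =
      H t * (W t + ∑ i : Fin n, deriv (fun τ => s τ i) t • A i (s t))
        * (H t)⁻¹ * H_C t) :
    ∀ t : ℝ, H_C t = H t * F (s t) := by

  have hHd : Differentiable ℝ H := hH.differentiable one_ne_zero
  have hFd : Differentiable ℝ F := hF.differentiable one_ne_zero
  have hsd : Differentiable ℝ s := hs.differentiable one_ne_zero
  set M : ℝ → Matrix (Fin 4) (Fin 4) ℝ :=
    fun τ => H τ * (W τ + ∑ i : Fin n, deriv (fun r => s r i) τ • A i (s τ)) * (H τ)⁻¹ with hM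
  have hdet : ∀ τ, IsUnit (H τ).det := fun τ => (Matrix.isUnit_iff_isUnit_det _).mp (hHinv τ)
  have hXc : Continuous fun τ => W τ + ∑ i : Fin n, deriv (fun r => s r i) τ • A i (s τ) := by
    apply hW.add
    apply continuous_finset_sum
    intro i _
    have h1 : ContDiff ℝ 1 fun r => s r i := (contDiff_pi.mp hs) i
    exact (h1.continuous_deriv le_rfl).smul ((hAc i).comp hs.continuous)
  have hinvc : Continuous fun τ => (H τ)⁻¹ := by
    simp only [Matrix.inv_def, Ring.inverse_eq_inv']
    exact (hH.continuous.matrix_det.inv₀ fun τ => (hdet τ).ne_zero).smul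
      hH.continuous.matrix_adjugate
  have hMc : Continuous M := (hH.continuous.matrix_mul hXc).matrix_mul hinvc
  have hf : ∀ t, HasDerivAt H_C (M t * H_C t) t := by
    intro t
    have h := (hHC t).hasDerivAt
    erw [hHCode t] at h
    simp only [hM]
    exact h
  have hg : ∀ t, HasDerivAt (fun τ => H τ * F (s τ)) (M t * (H t * F (s t))) t := by
    intro t
    have hH' : HasDerivAt H (H t * W t) t := by
      have := (hHd t).hasDerivAt; erw [hHW t] at this; exact this
    have hs' : HasDerivAt s (deriv s t) t := (hsd t).hasDerivAt
    have hcompi : ∀ i : Fin n, deriv (fun r => s r i) t = deriv s t i := by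
      intro i
      have h := (ContinuousLinearMap.proj i :
        (Fin n → ℝ) →L[ℝ] ℝ).hasFDerivAt.comp_hasDerivAt t hs'
      have h2 : HasDerivAt (fun r => s r i) (deriv s t i) t := by
        exact h
      exact h2.deriv
    have hFs : HasDerivAt (fun τ => F (s τ)) (fderiv ℝ F (s t) (deriv s t)) t :=
      (hFd (s t)).hasFDerivAt.comp_hasDerivAt t hs'
    have hfd : fderiv ℝ F (s t) (deriv s t)
        = (∑ i : Fin n, deriv (fun r => s r i) t • A i (s t)) * F (s t) := by
      conv_lhs => rw [← Finset.univ_sum_single (deriv s t)]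
      rw [map_sum, Finset.sum_mul]
      refine Finset.sum_congr rfl fun i _ => ?_
      have hsingle : Pi.single i (deriv s t i) = deriv s t i • (Pi.single i 1 : Fin n → ℝ) := by
        rw [← Pi.single_smul, smul_eq_mul, mul_one]
      rw [hsingle, (fderiv ℝ F (s t)).map_smul, hFA (s t) i, hcompi i, smul_mul_assoc]
    rw [hfd] at hFs
    have hmul := hH'.mul4 hFs
    convert hmul using 1
    simp only [hM]
    have h1 : (H t)⁻¹ * (H t * F (s t)) = F (s t) := by
      rw [← Matrix.mul_assoc, Matrix.nonsing_inv_mul _ (hdet t), Matrix.one_mul]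
    rw [Matrix.mul_assoc (H t * _) (H t)⁻¹, h1, Matrix.mul_assoc (H t) _ (F (s t)),
      Matrix.add_mul, Matrix.mul_add, ← Matrix.mul_assoc (H t) (W t), add_comm]
  exact linear_ODE_unique M hMc H_C (fun τ => H τ * F (s τ)) t₀ hf hg hHC₀
end
end

section
/- Let m ≥ 1 and let V : ℝ → Matrix (Fin m) (Fin m) ℝ. Let X : ℝ → Matrix (Fin m) (Fin m) ℝ be differentiable with X(t) invertible for all t and X'(t) = X(t) · V(t), and let h : ℝ → ℝᵐ be differentiable with h'(t) = V(t)ᵀ · h(t). Then the function t ↦ (X(t)ᵀ)⁻¹ · h(t) is constant. -/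
open Matrix

attribute [local instance] Matrix.normedAddCommGroup Matrix.normedSpace

noncomputable section

/-- Auxiliary: the determinant of an entrywise-differentiable matrix family is differentiable. -/
lemma differentiable_det_aux {m : ℕ} (f : ℝ → Matrix (Fin m) (Fin m) ℝ)
    (hf : ∀ i j, Differentiable ℝ fun t => f t i j) :
    Differentiable ℝ fun t => (f t).det := by
  simp only [Matrix.det_apply, Units.smul_def, zsmul_eq_mul]
  exact Differentiable.fun_sum fun σ _ =>
    (Differentiable.fun_finsetProd fun i _ => hf (σ i) i).const_mul _

/-- **Conservation of the transported momentum (Noether's theorem, STATEMENT 8).**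
If `X' = X V` with `X` invertible and `h' = Vᵀ h`, then `X⁻ᵀ h` is constant. -/
theorem transported_momentum_constant (m : ℕ) (hm : 1 ≤ m)
    (V X : ℝ → Matrix (Fin m) (Fin m) ℝ)
    (hX : Differentiable ℝ X) (hXinv : ∀ t, IsUnit (X t))
    (hXV : ∀ t, deriv X t = X t * V t)
    (h : ℝ → Fin m → ℝ) (hh : Differentiable ℝ h)
    (hhV : ∀ t, deriv h t = ((V t)ᵀ).mulVec (h t)) :
    ∀ t₁ t₂ : ℝ,
      ((X t₁)ᵀ)⁻¹.mulVec (h t₁) = ((X t₂)ᵀ)⁻¹.mulVec (h t₂) := by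
  intro t₁ t₂
  set g : ℝ → Matrix (Fin m) (Fin m) ℝ := fun t => ((X t)ᵀ)⁻¹ with hgdef
  -- basic invertibility facts
  have hdetX : ∀ t, IsUnit ((X t)ᵀ).det := fun t => by
    rw [Matrix.det_transpose]
    exact (Matrix.isUnit_iff_isUnit_det _).mp (hXinv t)
  have hXg : ∀ t, (X t)ᵀ * g t = 1 := fun t => Matrix.mul_nonsing_inv _ (hdetX t)
  have hgX : ∀ t, g t * (X t)ᵀ = 1 := fun t => Matrix.nonsing_inv_mul _ (hdetX t)
  -- entrywise derivatives of X and h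
  have hXd : ∀ t, HasDerivAt X (X t * V t) t := fun t => hXV t ▸ (hX t).hasDerivAt
  have hXe : ∀ i j t, HasDerivAt (fun s => X s i j) ((X t * V t) i j) t := fun i j t =>
    hasDerivAt_pi.mp (hasDerivAt_pi.mp (hXd t) i) j
  have hhe : ∀ j t, HasDerivAt (fun s => h s j) (((V t)ᵀ.mulVec (h t)) j) t := fun j t =>
    hasDerivAt_pi.mp (hhV t ▸ (hh t).hasDerivAt) j
  -- entrywise differentiability of X
  have hXentry : ∀ i j, Differentiable ℝ fun t => X t i j := fun i j t =>
    (hXe i j t).differentiableAt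
  -- differentiability of g via the adjugate formula
  have hg : Differentiable ℝ g := by
    have hform : g = fun t => ((X t)ᵀ.det)⁻¹ • (X t)ᵀ.adjugate := by
      funext t
      show ((X t)ᵀ)⁻¹ = _
      rw [Matrix.inv_def, Ring.inverse_eq_inv']
    rw [hform]
    have hdet : Differentiable ℝ fun t => ((X t)ᵀ).det :=
      differentiable_det_aux _ fun i j => hXentry j i
    have hdetinv : Differentiable ℝ fun t => (((X t)ᵀ).det)⁻¹ :=
      hdet.inv fun t => (hdetX t).ne_zero
    have hadj : Differentiable ℝ fun t => ((X t)ᵀ).adjugate := by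
      apply differentiable_pi.mpr; intro i
      apply differentiable_pi.mpr; intro j
      have : (fun t => ((X t)ᵀ).adjugate i j)
          = fun t => (((X t)ᵀ).updateRow j (Pi.single i 1)).det := by
        funext t; exact Matrix.adjugate_apply _ i j
      rw [this]
      apply differentiable_det_aux
      intro k l
      rcases eq_or_ne k j with rfl | hk
      · simp only [Matrix.updateRow_apply, if_pos rfl]
        exact differentiable_const _
      · simp only [Matrix.updateRow_apply, if_neg hk, Matrix.transpose_apply]
        exact hXentry l k
    exact hdetinv.smul hadj
  have hge : ∀ i j t, HasDerivAt (fun s => g s i j) (deriv g t i j) t := fun i j t =>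
    hasDerivAt_pi.mp (hasDerivAt_pi.mp (hg t).hasDerivAt i) j
  -- the key derivative identity for g
  have key : ∀ t, deriv g t = -(g t * (V t)ᵀ) := by
    intro t
    have eq1 : (X t * V t)ᵀ * g t + (X t)ᵀ * deriv g t = 0 := by
      ext i j
      have hP : HasDerivAt (fun s => ((X s)ᵀ * g s) i j)
          (∑ k, ((X t * V t) k i * g t k j + X t k i * deriv g t k j)) t := by
        simp only [Matrix.mul_apply, Matrix.transpose_apply]
        exact HasDerivAt.fun_sum fun k _ => (hXe k i t).mul (hge k j t)
      have hC : HasDerivAt (fun s => ((X s)ᵀ * g s) i j) 0 t := by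
        have hconst : (fun s => ((X s)ᵀ * g s) i j)
            = fun _ => (1 : Matrix (Fin m) (Fin m) ℝ) i j := by
          funext s; rw [hXg s]
        rw [hconst]; exact hasDerivAt_const _ _
      have hzero := hP.unique hC
      simp only [Matrix.add_apply, Matrix.mul_apply, Matrix.transpose_apply,
        Matrix.zero_apply, ← Finset.sum_add_distrib]
      exact hzero
    have eq2 : (X t)ᵀ * deriv g t = -((X t * V t)ᵀ * g t) :=
      eq_neg_of_add_eq_zero_right eq1
    calc deriv g t = (g t * (X t)ᵀ) * deriv g t := by rw [hgX, one_mul]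
      _ = g t * ((X t)ᵀ * deriv g t) := by rw [mul_assoc]
      _ = g t * (-((X t * V t)ᵀ * g t)) := by rw [eq2]
      _ = -(g t * ((V t)ᵀ * ((X t)ᵀ * g t))) := by
          rw [Matrix.transpose_mul, mul_neg, mul_assoc]
      _ = -(g t * (V t)ᵀ) := by rw [hXg, mul_one]
  -- the transported momentum has zero derivative
  have hF : ∀ t, HasDerivAt (fun s => (g s).mulVec (h s)) 0 t := by
    intro t
    have hFi : ∀ i, HasDerivAt (fun s => ((g s).mulVec (h s)) i)
        (((deriv g t).mulVec (h t) + (g t).mulVec ((V t)ᵀ.mulVec (h t))) i) t := by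
      intro i
      have hsum : HasDerivAt (fun s => ∑ k, g s i k * h s k)
          (∑ k, (deriv g t i k * h t k + g t i k * ((V t)ᵀ.mulVec (h t)) k)) t :=
        HasDerivAt.fun_sum fun k _ => (hge i k t).mul (hhe k t)
      simpa only [Matrix.mulVec, dotProduct, Pi.add_apply,
        Finset.sum_add_distrib] using hsum
    have hval : (deriv g t).mulVec (h t) + (g t).mulVec ((V t)ᵀ.mulVec (h t)) = 0 := by
      rw [key, Matrix.mulVec_mulVec, Matrix.neg_mulVec, neg_add_cancel]
    have := hasDerivAt_pi.mpr hFi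
    rwa [hval] at this
  have hdiff : Differentiable ℝ fun s => (g s).mulVec (h s) := fun t => (hF t).differentiableAt
  have hderiv : ∀ t, deriv (fun s => (g s).mulVec (h s)) t = 0 := fun t => (hF t).deriv
  exact is_const_of_deriv_eq_zero hdiff hderiv t₁ t₂
end
end

section
/- Let A : ℝ → ℝ⁶ be continuous and let F₀ ∈ SE(3). Then there exists a differentiable map F : ℝ → Matrix (Fin 4) (Fin 4) ℝ such that F(0) = F₀, F'(t) = (A(t))^∧ · F(t) for all t ∈ ℝ, and F(t) ∈ SE(3) for all t ∈ ℝ. -/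
open Matrix

attribute [local instance] Matrix.normedAddCommGroup Matrix.normedSpace

noncomputable section

open Set MeasureTheory intervalIntegral Filter

lemma abs_integral_abs_pow (k : ℕ) (u : ℝ) :
    |∫ s in (0:ℝ)..u, |s| ^ k| = |u| ^ (k+1) / (k+1) := by
  rcases le_or_gt 0 u with hu | hu
  · rw [intervalIntegral.integral_congr (g := fun s => s ^ k)
      (fun s hs => by
        rw [uIcc_of_le hu] at hs
        simp [abs_of_nonneg hs.1]),
      integral_pow]
    rw [zero_pow (Nat.succ_ne_zero k), sub_zero, abs_div, abs_pow, abs_of_nonneg (by positivity : (0:ℝ) ≤ (k:ℝ)+1)]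
  · rw [intervalIntegral.integral_congr (g := fun s => (-1 : ℝ) ^ k * s ^ k)
      (fun s hs => by
        rw [uIcc_of_ge hu.le] at hs
        rw [abs_of_nonpos hs.2, neg_pow]),
      intervalIntegral.integral_const_mul, integral_pow]
    rw [zero_pow (Nat.succ_ne_zero k), sub_zero, abs_mul, abs_pow, abs_neg, abs_one, one_pow,
      one_mul, abs_div, abs_pow, abs_of_nonneg (by positivity : (0:ℝ) ≤ (k:ℝ)+1)]

section ODE
variable {E : Type*} [NormedAddCommGroup E] [NormedSpace ℝ E] [CompleteSpace E]

lemma prim_hasDerivAt {f : ℝ → E} (hf : Continuous f) (t : ℝ) :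
    HasDerivAt (fun u => ∫ s in (0:ℝ)..u, f s) (f t) t :=
  intervalIntegral.integral_hasDerivAt_right (hf.intervalIntegrable _ _)
    (hf.stronglyMeasurableAtFilter _ _) hf.continuousAt

noncomputable def pMap (M : ℝ → E →L[ℝ] E) (hM : Continuous M) (x₀ : E) (n : ℝ) (hn : (0:ℝ) ≤ n)
    (γ : C(Icc (-n : ℝ) n, E)) : C(Icc (-n : ℝ) n, E) :=
  ⟨fun u => x₀ + ∫ s in (0:ℝ)..(u : ℝ), M s (IccExtend (neg_le_self hn) γ s), by
    have hc : Continuous fun s : ℝ => M s (IccExtend (neg_le_self hn) γ s) :=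
      hM.clm_apply γ.continuous.Icc_extend'
    have : Continuous fun u : ℝ => ∫ s in (0:ℝ)..u, M s (IccExtend (neg_le_self hn) γ s) :=
      continuous_iff_continuousAt.2 fun t => (prim_hasDerivAt hc t).continuousAt
    exact continuous_const.add (this.comp continuous_subtype_val)⟩

lemma pMap_apply (M : ℝ → E →L[ℝ] E) (hM : Continuous M) (x₀ : E) (n : ℝ) (hn : (0:ℝ) ≤ n)
    (γ : C(Icc (-n : ℝ) n, E)) (u : Icc (-n : ℝ) n) :
    pMap M hM x₀ n hn γ u = x₀ + ∫ s in (0:ℝ)..(u : ℝ), M s (IccExtend (neg_le_self hn) γ s) := rfl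

lemma mem_of_uIoc {n : ℝ} (hn : (0:ℝ) ≤ n) (u : Icc (-n:ℝ) n) {t : ℝ}
    (ht : t ∈ Set.uIoc (0:ℝ) (u:ℝ)) : t ∈ Icc (-n:ℝ) n := by
  rcases Set.mem_uIoc.1 ht with h | h
  · exact ⟨le_trans (neg_nonpos.2 hn) h.1.le, le_trans h.2 u.2.2⟩
  · exact ⟨le_trans u.2.1 h.1.le, le_trans h.2 hn⟩

lemma pMap_iter_est (M : ℝ → E →L[ℝ] E) (hM : Continuous M) (x₀ : E) (n : ℝ) (hn : (0:ℝ) ≤ n)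
    {L : ℝ} (hL0 : 0 ≤ L) (hL : ∀ t ∈ Icc (-n:ℝ) n, ‖M t‖ ≤ L)
    (γ δ : C(Icc (-n:ℝ) n, E)) : ∀ (k : ℕ) (u : Icc (-n:ℝ) n),
      ‖(pMap M hM x₀ n hn)^[k] γ u - (pMap M hM x₀ n hn)^[k] δ u‖
        ≤ L ^ k * |(u:ℝ)| ^ k / (Nat.factorial k) * dist γ δ := by
  intro k
  induction k with
  | zero =>
    intro u
    simpa [dist_eq_norm] using ContinuousMap.dist_apply_le_dist (f := γ) (g := δ) u
  | succ k ih =>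
    intro u
    rw [Function.iterate_succ_apply', Function.iterate_succ_apply']
    set g := (pMap M hM x₀ n hn)^[k] γ with hg
    set d := (pMap M hM x₀ n hn)^[k] δ with hd
    have hgc : Continuous fun s : ℝ => M s (IccExtend (neg_le_self hn) g s) :=
      hM.clm_apply g.continuous.Icc_extend'
    have hdc : Continuous fun s : ℝ => M s (IccExtend (neg_le_self hn) d s) :=
      hM.clm_apply d.continuous.Icc_extend'
    have key : pMap M hM x₀ n hn g u - pMap M hM x₀ n hn d u
        = ∫ s in (0:ℝ)..(u:ℝ), M s (IccExtend (neg_le_self hn) g s - IccExtend (neg_le_self hn) d s) := by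
      rw [pMap_apply, pMap_apply, add_sub_add_left_eq_sub,
        ← intervalIntegral.integral_sub (hgc.intervalIntegrable _ _) (hdc.intervalIntegrable _ _)]
      simp
    rw [key]
    have hbound : ∀ t ∈ Set.uIoc (0:ℝ) (u:ℝ),
        ‖M t (IccExtend (neg_le_self hn) g t - IccExtend (neg_le_self hn) d t)‖
          ≤ L ^ (k+1) / (Nat.factorial k) * dist γ δ * |t| ^ k := by
      intro t ht
      have htK : t ∈ Icc (-n:ℝ) n := mem_of_uIoc hn u ht
      have h1 : ‖M t (IccExtend (neg_le_self hn) g t - IccExtend (neg_le_self hn) d t)‖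
          ≤ L * ‖g ⟨t, htK⟩ - d ⟨t, htK⟩‖ := by
        rw [IccExtend_of_mem _ _ htK, IccExtend_of_mem _ _ htK]
        exact le_trans ((M t).le_opNorm _) (by gcongr; exact hL t htK)
      refine h1.trans ?_
      have h2 := ih ⟨t, htK⟩
      calc L * ‖g ⟨t, htK⟩ - d ⟨t, htK⟩‖
          ≤ L * (L ^ k * |t| ^ k / (Nat.factorial k) * dist γ δ) := by gcongr
        _ = L ^ (k+1) / (Nat.factorial k) * dist γ δ * |t| ^ k := by ring
    have hgint : IntervalIntegrable (fun t : ℝ => L ^ (k+1) / (Nat.factorial k) * dist γ δ * |t| ^ k)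
        volume (0:ℝ) (u:ℝ) := (Continuous.intervalIntegrable (by continuity) _ _)
    have h3 := intervalIntegral.norm_integral_le_abs_of_norm_le
      (μ := volume) (f := fun s => M s (IccExtend (neg_le_self hn) g s - IccExtend (neg_le_self hn) d s))
      (ae_restrict_of_forall_mem measurableSet_uIoc hbound) hgint
    refine h3.trans ?_
    rw [intervalIntegral.integral_const_mul, abs_mul, abs_integral_abs_pow]
    rw [abs_of_nonneg (by positivity)]
    apply le_of_eq
    have h1 : ((k:ℝ)+1) ≠ 0 := by positivity
    have h2 : ((Nat.factorial k : ℕ):ℝ) ≠ 0 := by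
      exact_mod_cast (Nat.factorial_pos k).ne'
    rw [Nat.factorial_succ]
    push_cast
    field_simp
lemma exists_sol (M : ℝ → E →L[ℝ] E) (hM : Continuous M) (x₀ : E) (n : ℝ) (hn : (0:ℝ) ≤ n) :
    ∃ f : ℝ → E, f 0 = x₀ ∧ (∀ t ∈ Icc (-n:ℝ) n, HasDerivAt f (M t (f t)) t) ∧
      ∀ g : ℝ → E, g 0 = x₀ → (∀ t ∈ Icc (-n:ℝ) n, HasDerivAt g (M t (g t)) t) →
        ∀ t ∈ Icc (-n:ℝ) n, f t = g t := by
  obtain ⟨C, hC⟩ := (isCompact_Icc (a := (-n:ℝ)) (b := n)).exists_bound_of_continuousOn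
    hM.continuousOn
  set L : ℝ := max C 0 with hLdef
  have hL0 : 0 ≤ L := le_max_right _ _
  have hL : ∀ t ∈ Icc (-n:ℝ) n, ‖M t‖ ≤ L := fun t ht => (hC t ht).trans (le_max_left _ _)
  -- choose k with contraction ratio < 1
  obtain ⟨k, hk⟩ : ∃ k : ℕ, L ^ k * n ^ k / (Nat.factorial k) < 1 := by
    have h := FloorSemiring.tendsto_pow_div_factorial_atTop (K := ℝ) (L * n)
    obtain ⟨k, hk⟩ := (h.eventually_lt_const (by norm_num : (0:ℝ) < 1)).exists
    refine ⟨k, lt_of_le_of_lt (le_of_eq ?_) hk⟩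
    rw [mul_pow]
  haveI : Nonempty C(Icc (-n:ℝ) n, E) := ⟨ContinuousMap.const _ x₀⟩
  set P := pMap M hM x₀ n hn with hP
  set q : NNReal := (L ^ k * n ^ k / (Nat.factorial k)).toNNReal with hq
  have hq1 : q < 1 := by
    rw [hq, ← Real.toNNReal_one]
    exact (Real.toNNReal_lt_toNNReal_iff one_pos).2 hk
  have hqc : (q : ℝ) = L ^ k * n ^ k / (Nat.factorial k) := Real.coe_toNNReal _ (by positivity)
  have hLip : LipschitzWith q (P^[k]) := by
    apply LipschitzWith.of_dist_le_mul
    intro γ δ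
    rw [ContinuousMap.dist_le (by positivity)]
    intro u
    rw [dist_eq_norm]
    refine (pMap_iter_est M hM x₀ n hn hL0 hL γ δ k u).trans ?_
    rw [hqc]
    have habs : |(u:ℝ)| ≤ n := abs_le.2 ⟨u.2.1, u.2.2⟩
    gcongr
  have hCon : ContractingWith q (P^[k]) := ⟨hq1, hLip⟩
  set φ := ContractingWith.fixedPoint (P^[k]) hCon with hφ
  have hfix : P φ = φ := by
    have h1 : Function.IsFixedPt (P^[k]) (P φ) := by
      have h2 : Function.IsFixedPt (P^[k]) φ := hCon.fixedPoint_isFixedPt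
      show P^[k] (P φ) = P φ
      calc P^[k] (P φ) = P^[k+1] φ := by rw [Function.iterate_succ_apply]
        _ = P (P^[k] φ) := Function.iterate_succ_apply' P k φ
        _ = P φ := by rw [h2]
    exact hCon.fixedPoint_unique h1
  -- the solution
  set f : ℝ → E := fun t => x₀ + ∫ s in (0:ℝ)..t, M s (IccExtend (neg_le_self hn) φ s) with hf
  have hc : Continuous fun s : ℝ => M s (IccExtend (neg_le_self hn) φ s) :=
    hM.clm_apply φ.continuous.Icc_extend'
  have hfval : ∀ t (ht : t ∈ Icc (-n:ℝ) n), f t = φ ⟨t, ht⟩ := by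
    intro t ht
    have := DFunLike.congr_fun hfix ⟨t, ht⟩
    exact this
  have hfderiv : ∀ t, HasDerivAt f (M t (IccExtend (neg_le_self hn) φ t)) t := fun t =>
    (prim_hasDerivAt hc t).const_add x₀
  refine ⟨f, ?_, ?_, ?_⟩
  · rw [hf]; simp
  · intro t ht
    have h4 : IccExtend (neg_le_self hn) φ t = f t := by
      rw [IccExtend_of_mem _ _ ht, hfval t ht]
    have := hfderiv t
    rwa [h4] at this
  · -- uniqueness
    intro g hg0 hgd t ht
    have hgsub : ∀ u : Icc (-n:ℝ) n, uIcc (0:ℝ) (u:ℝ) ⊆ Icc (-n:ℝ) n := fun u =>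
      uIcc_subset_Icc ⟨neg_nonpos.2 hn, hn⟩ u.2
    have hgcont : ContinuousOn g (Icc (-n:ℝ) n) := fun s hs =>
      ((hgd s hs).continuousAt).continuousWithinAt
    set gg : C(Icc (-n:ℝ) n, E) := ⟨(Icc (-n:ℝ) n).restrict g, hgcont.restrict⟩ with hgb
    have hgfix : Function.IsFixedPt P gg := by
      apply ContinuousMap.ext
      intro u
      show x₀ + ∫ s in (0:ℝ)..(u:ℝ), M s (IccExtend (neg_le_self hn) gg s) = g u
      rw [intervalIntegral.integral_congr (g := fun s => M s (g s))
        (fun s hs => by rw [IccExtend_of_mem _ _ (hgsub u hs)]; rfl)]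
      rw [intervalIntegral.integral_eq_sub_of_hasDerivAt
        (fun s hs => hgd s (hgsub u hs))
        (ContinuousOn.intervalIntegrable
          (hM.continuousOn.clm_apply (hgcont.mono (hgsub u)) : ContinuousOn _ (uIcc (0:ℝ) (u:ℝ))))]
      rw [hg0]
      abel
    have hgφ : gg = φ := hCon.fixedPoint_unique (f := P^[k])
      (by
        show P^[k] gg = gg
        have : ∀ m : ℕ, P^[m] gg = gg := by
          intro m; induction m with
          | zero => rfl
          | succ m ihm => rw [Function.iterate_succ_apply', ihm, hgfix]
        exact this k)
    rw [hfval t ht, ← hgφ]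
    rfl

lemma linear_ode_global (M : ℝ → E →L[ℝ] E) (hM : Continuous M) (x₀ : E) :
    ∃ F : ℝ → E, F 0 = x₀ ∧ ∀ t, HasDerivAt F (M t (F t)) t := by
  choose f hf0 hfd hfu using fun m : ℕ => exists_sol M hM x₀ (m : ℝ) (Nat.cast_nonneg m)
  set F : ℝ → E := fun t => f (⌊|t|⌋₊ + 1) t with hF
  have key : ∀ (m : ℕ) (t : ℝ), |t| < m → F t = f m t := by
    intro m t ht
    set j : ℕ := ⌊|t|⌋₊ + 1 with hj
    have hjm : j ≤ m := Nat.succ_le_of_lt ((Nat.floor_lt (abs_nonneg t)).2 ht)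
    have htj : t ∈ Icc (-(j:ℝ)) (j:ℝ) := by
      have : |t| ≤ (j:ℝ) := by
        rw [hj]; push_cast
        exact (Nat.lt_floor_add_one |t|).le
      exact abs_le.1 this
    have hIccsub : Icc (-(j:ℝ)) (j:ℝ) ⊆ Icc (-(m:ℝ)) (m:ℝ) :=
      Icc_subset_Icc (by push_cast; exact_mod_cast neg_le_neg (Nat.cast_le.2 hjm)) (Nat.cast_le.2 hjm)
    exact hfu j (f m) (hf0 m) (fun s hs => hfd m s (hIccsub hs)) t htj
  have hFd : ∀ t, HasDerivAt F (M t (F t)) t := by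
    intro t
    set m : ℕ := ⌊|t|⌋₊ + 1 with hm
    have htm : |t| < m := by rw [hm]; push_cast; exact Nat.lt_floor_add_one |t|
    have hnb : Ioo (-(m:ℝ)) (m:ℝ) ∈ nhds t :=
      Ioo_mem_nhds (abs_lt.1 htm).1 (abs_lt.1 htm).2
    have hEq : F =ᶠ[nhds t] f m :=
      eventuallyEq_of_mem hnb fun s hs => key m s (abs_lt.2 ⟨hs.1, hs.2⟩)
    have hd := (hfd m t (abs_le.1 htm.le)).congr_of_eventuallyEq hEq
    rwa [← key m t htm] at hd
  refine ⟨F, ?_, hFd⟩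
  have h0 : F 0 = f (⌊|(0:ℝ)|⌋₊ + 1) 0 := rfl
  rw [h0, hf0]
end ODE

abbrev M4 := Matrix (Fin 4) (Fin 4) ℝ
abbrev M3 := Matrix (Fin 3) (Fin 3) ℝ

-- bottom row of hat4 * X is zero
lemma hat4_mul_row3 (V : (Fin 3 → ℝ) × (Fin 3 → ℝ)) (X : M4) (j : Fin 4) :
    (hat4 V * X) 3 j = 0 := by
  simp [hat4, mul_apply, Fin.sum_univ_four]

lemma homog_row3 (R : M3) (o : Fin 3 → ℝ) :
    homog R o 3 0 = 0 ∧ homog R o 3 1 = 0 ∧ homog R o 3 2 = 0 ∧ homog R o 3 3 = 1 := by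
  refine ⟨?_, ?_, ?_, ?_⟩ <;> simp [homog]

-- submatrix map
def subL : M4 →ₗ[ℝ] M3 where
  toFun X := X.submatrix (![0,1,2] : Fin 3 → Fin 4) (![0,1,2] : Fin 3 → Fin 4)
  map_add' X Y := rfl
  map_smul' c X := rfl

def subCLM : M4 →L[ℝ] M3 := LinearMap.toContinuousLinearMap subL

lemma subCLM_apply (X : M4) (i j : Fin 3) :
    subCLM X i j = X (![0,1,2] i) (![0,1,2] j) := rfl

-- block identity: if bottom row (first 3 entries) of X vanish then
-- subCLM (hat4 V * X) = hat3 V.2 * subCLM X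
lemma sub_hat4_mul (V : (Fin 3 → ℝ) × (Fin 3 → ℝ)) (X : M4)
    (h0 : X 3 0 = 0) (h1 : X 3 1 = 0) (h2 : X 3 2 = 0) :
    subCLM (hat4 V * X) = hat3 V.2 * subCLM X := by
  ext i j
  fin_cases i <;> fin_cases j <;>
    simp [subCLM_apply, hat4, hat3, mul_apply, vecMul, dotProduct, Fin.sum_univ_four,
      Fin.sum_univ_three, h0, h1, h2] <;> ring

def entry3 (i j : Fin 3) : M3 →L[ℝ] ℝ :=
  LinearMap.toContinuousLinearMap ((LinearMap.proj j).comp (LinearMap.proj (R := ℝ) (φ := fun _ : Fin 3 => Fin 3 → ℝ) i))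

-- antisymmetry cancellation
example (w : Fin 3 → ℝ) (R : M3) (i j : Fin 3) :
    ∑ k : Fin 3, ((hat3 w * R) k i * R k j + R k i * (hat3 w * R) k j) = 0 := by
  simp [hat3, mul_apply, Fin.sum_univ_three]
  ring

def mulLeftL : M4 →ₗ[ℝ] (M4 →L[ℝ] M4) where
  toFun B := LinearMap.toContinuousLinearMap (LinearMap.mulLeft ℝ B)
  map_add' B C := by ext X; simp [add_mul]
  map_smul' c B := by ext X; simp [smul_mul_assoc]

lemma mulLeftL_apply (B X : M4) : mulLeftL B X = B * X := rfl

lemma cont_hat4A {A : ℝ → (Fin 3 → ℝ) × (Fin 3 → ℝ)} (hA : Continuous A) :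
    Continuous fun t => hat4 (A t) := by
  have h1 : ∀ i, Continuous fun t => (A t).1 i := fun i =>
    (continuous_apply i).comp (continuous_fst.comp hA)
  have h2 : ∀ i, Continuous fun t => (A t).2 i := fun i =>
    (continuous_apply i).comp (continuous_snd.comp hA)
  apply continuous_matrix
  intro i j
  fin_cases i <;> fin_cases j <;> simp [hat4] <;> fun_prop

lemma contM {A : ℝ → (Fin 3 → ℝ) × (Fin 3 → ℝ)} (hA : Continuous A) :
    Continuous fun t => mulLeftL (hat4 (A t)) :=
  mulLeftL.continuous_of_finiteDimensional.comp (cont_hat4A hA)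

def entry4 (i j : Fin 4) : M4 →L[ℝ] ℝ :=
  LinearMap.toContinuousLinearMap ((LinearMap.proj j).comp (LinearMap.proj (R := ℝ) (φ := fun _ : Fin 4 => Fin 4 → ℝ) i))

lemma entry4_apply (i j : Fin 4) (X : M4) : entry4 i j X = X i j := rfl

/-- **Global integrability for one internal degree of freedom (STATEMENT 13).**
For continuous `A : ℝ → ℝ⁶` and `F₀ ∈ SE(3)` there is a differentiable
`F : ℝ → ℝ^{4×4}` with `F 0 = F₀`, `F' = A^∧ F`, and `F t ∈ SE(3)` for all `t`. -/
theorem one_dof_integrable (A : ℝ → (Fin 3 → ℝ) × (Fin 3 → ℝ))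
    (hA : Continuous A) (F₀ : Matrix (Fin 4) (Fin 4) ℝ) (hF₀ : F₀ ∈ SE3) :
    ∃ F : ℝ → Matrix (Fin 4) (Fin 4) ℝ,
      F 0 = F₀ ∧ Differentiable ℝ F ∧
      (∀ t : ℝ, deriv F t = hat4 (A t) * F t) ∧
      (∀ t : ℝ, F t ∈ SE3) := by
  obtain ⟨R₀, o₀, hR₀orth, hR₀det, hF₀eq⟩ := hF₀
  obtain ⟨F, hF0, hFd'⟩ := linear_ode_global (fun t => mulLeftL (hat4 (A t))) (contM hA) F₀
  have hFd : ∀ t, HasDerivAt F (hat4 (A t) * F t) t := hFd'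
  have hFcont : Continuous F := continuous_iff_continuousAt.2 fun t => (hFd t).continuousAt
  -- entries of F
  have hent : ∀ (i j : Fin 4) (t : ℝ),
      HasDerivAt (fun t => F t i j) ((hat4 (A t) * F t) i j) t := fun i j t =>
    (entry4 i j).hasFDerivAt.comp_hasDerivAt t (hFd t)
  -- bottom row is constant
  have hrow : ∀ (j : Fin 4) (t : ℝ), F t 3 j = F₀ 3 j := by
    intro j t
    have hz : ∀ t, HasDerivAt (fun t => F t 3 j) 0 t := fun t => by
      have := hent 3 j t
      rwa [hat4_mul_row3] at this
    have hconst := is_const_of_deriv_eq_zero (𝕜 := ℝ)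
      (fun t => (hz t).differentiableAt) (fun t => (hz t).deriv) t 0
    rw [hconst, hF0]
  have h30 : ∀ t, F t 3 0 = 0 := fun t => by
    rw [hrow 0 t, hF₀eq]; simp [homog]
  have h31 : ∀ t, F t 3 1 = 0 := fun t => by
    rw [hrow 1 t, hF₀eq]; simp [homog]
  have h32 : ∀ t, F t 3 2 = 0 := fun t => by
    rw [hrow 2 t, hF₀eq]; simp [homog]
  have h33 : ∀ t, F t 3 3 = 1 := fun t => by
    rw [hrow 3 t, hF₀eq]; simp [homog]
  -- rotation block
  set Rm : ℝ → M3 := fun t => subCLM (F t) with hRmdef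
  have hRm : ∀ t, HasDerivAt Rm (hat3 ((A t).2) * Rm t) t := fun t => by
    have h := subCLM.hasFDerivAt.comp_hasDerivAt t (hFd t)
    have h2 := sub_hat4_mul (A t) (F t) (h30 t) (h31 t) (h32 t)
    have h3 : HasDerivAt Rm (subCLM (hat4 (A t) * F t)) t := h
    rw [h2] at h3
    exact h3
  have hRmE : ∀ (k i : Fin 3) (t : ℝ),
      HasDerivAt (fun t => Rm t k i) ((hat3 ((A t).2) * Rm t) k i) t := fun k i t =>
    (entry3 k i).hasFDerivAt.comp_hasDerivAt t (hRm t)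
  have hRm0 : Rm 0 = R₀ := by
    ext i j
    have : Rm 0 i j = F₀ (![0,1,2] i) (![0,1,2] j) := by rw [← hF0]; rfl
    rw [this, hF₀eq]
    fin_cases i <;> fin_cases j <;> simp [homog]
  -- RᵀR is constant
  have hconstM : ∀ t, (Rm t)ᵀ * Rm t = (Rm 0)ᵀ * Rm 0 := by
    intro t
    ext i j
    have hsum : ∀ t, ((Rm t)ᵀ * Rm t) i j = ∑ k : Fin 3, Rm t k i * Rm t k j := by
      intro t; simp [Matrix.mul_apply, Matrix.transpose_apply]
    rw [hsum, hsum]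
    have hγ : ∀ t : ℝ, HasDerivAt (fun t => ∑ k : Fin 3, Rm t k i * Rm t k j) 0 t := by
      intro t
      have h := HasDerivAt.sum (u := Finset.univ)
        (A := fun (k : Fin 3) (t : ℝ) => Rm t k i * Rm t k j)
        (A' := fun k => (hat3 ((A t).2) * Rm t) k i * Rm t k j
          + Rm t k i * (hat3 ((A t).2) * Rm t) k j)
        (x := t) (fun k _ => (hRmE k i t).mul (hRmE k j t))
      have hz : ∑ k : Fin 3, ((hat3 ((A t).2) * Rm t) k i * Rm t k j
          + Rm t k i * (hat3 ((A t).2) * Rm t) k j) = 0 := by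
        simp [hat3, Matrix.mul_apply, Fin.sum_univ_three]
        ring
      rwa [hz] at h
    exact is_const_of_deriv_eq_zero (𝕜 := ℝ)
      (fun t => (hγ t).differentiableAt) (fun t => (hγ t).deriv) t 0
  have horth : ∀ t, (Rm t)ᵀ * Rm t = 1 := fun t => by
    rw [hconstM t, hRm0, hR₀orth]
  -- determinant
  have hdet2 : ∀ t, (Rm t).det * (Rm t).det = 1 := fun t => by
    have h := congrArg Matrix.det (horth t)
    rwa [Matrix.det_mul, Matrix.det_transpose, Matrix.det_one] at h
  have hRmcont : Continuous Rm := subCLM.continuous.comp hFcont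
  have hdetcont : Continuous fun t => (Rm t).det := hRmcont.matrix_det
  have hdet1 : ∀ t, (Rm t).det = 1 := by
    have hS : IsClopen {t : ℝ | (Rm t).det = 1} := by
      constructor
      · exact isClosed_eq hdetcont continuous_const
      · have hcompl : {t : ℝ | (Rm t).det = 1}ᶜ = {t : ℝ | (Rm t).det = -1} := by
          ext t
          simp only [Set.mem_compl_iff, Set.mem_setOf_eq]
          rcases mul_self_eq_one_iff.1 (hdet2 t) with h | h <;> simp [h] <;> norm_num
        have : IsClosed {t : ℝ | (Rm t).det = -1} := isClosed_eq hdetcont continuous_const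
        rw [← compl_compl {t : ℝ | (Rm t).det = 1}, hcompl]
        exact this.isOpen_compl
    have huniv : {t : ℝ | (Rm t).det = 1} = Set.univ := hS.eq_univ ⟨0, by
      simp only [Set.mem_setOf_eq]
      rw [hRm0, hR₀det]⟩
    intro t
    have : t ∈ {t : ℝ | (Rm t).det = 1} := huniv ▸ Set.mem_univ t
    exact this
  -- assemble
  refine ⟨F, hF0, fun t => (hFd t).differentiableAt, fun t => (hFd t).deriv, fun t => ?_⟩
  refine ⟨Rm t, ![F t 0 3, F t 1 3, F t 2 3], horth t, hdet1 t, ?_⟩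
  ext i j
  fin_cases i <;> fin_cases j <;>
    simp [homog, hRmdef, subCLM_apply, h30 t, h31 t, h32 t, h33 t]
end
end

section
/- Let V : ℝ → ℝ⁶ be continuous and let F : ℝ → Matrix (Fin 4) (Fin 4) ℝ be differentiable with F'(t) = (V(t))^∧ · F(t) for all t and F(0) ∈ SE(3). Then F(t) ∈ SE(3) for all t ∈ ℝ. -/
open Matrix

attribute [local instance] Matrix.normedAddCommGroup Matrix.normedSpace

noncomputable section

/-- **Invariance of SE(3) under se(3)-driven flows (STATEMENT 14).**
If `F' = V^∧ F` for continuous `V : ℝ → ℝ⁶` and `F 0 ∈ SE(3)`, then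
`F t ∈ SE(3)` for all `t`. -/
theorem se3_invariant (V : ℝ → (Fin 3 → ℝ) × (Fin 3 → ℝ)) (hV : Continuous V)
    (F : ℝ → Matrix (Fin 4) (Fin 4) ℝ) (hF : Differentiable ℝ F)
    (hode : ∀ t : ℝ, deriv F t = hat4 (V t) * F t)
    (h₀ : F 0 ∈ SE3) :
    ∀ t : ℝ, F t ∈ SE3 := by
  obtain ⟨R₀, o₀, hR₀, hdet₀, hF0⟩ := h₀
  have hFt : ∀ s, HasDerivAt F (hat4 (V s) * F s) s := fun s => hode s ▸ (hF s).hasDerivAt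
  have hE : ∀ (a b : Fin 4) (s : ℝ), HasDerivAt (fun s => F s a b) ((hat4 (V s) * F s) a b) s :=
    fun a b s => hasDerivAt_pi.mp (hasDerivAt_pi.mp (hFt s) a) b
  -- last row is constant
  have hrow3 : ∀ (j : Fin 4) (s : ℝ), F s 3 j = F 0 3 j := by
    intro j s
    have hd : ∀ s, HasDerivAt (fun s => F s 3 j) 0 s := by
      intro s
      have := hE 3 j s
      convert this using 1
      simp [mul_apply, hat4, Fin.sum_univ_four]
    exact is_const_of_deriv_eq_zero (fun s => (hd s).differentiableAt)
      (fun s => (hd s).deriv) s 0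
  have hc0 : ∀ s, F s 3 0 = 0 := by intro s; rw [hrow3 0 s, hF0]; simp [homog]
  have hc1 : ∀ s, F s 3 1 = 0 := by intro s; rw [hrow3 1 s, hF0]; simp [homog]
  have hc2 : ∀ s, F s 3 2 = 0 := by intro s; rw [hrow3 2 s, hF0]; simp [homog]
  have hc3 : ∀ s, F s 3 3 = 1 := by intro s; rw [hrow3 3 s, hF0]; simp [homog]
  -- Gram sums are constant
  have hq : ∀ i j : Fin 4, (∀ s, F s 3 i = 0) → (∀ s, F s 3 j = 0) → ∀ s : ℝ,
      F s 0 i * F s 0 j + F s 1 i * F s 1 j + F s 2 i * F s 2 j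
      = F 0 0 i * F 0 0 j + F 0 1 i * F 0 1 j + F 0 2 i * F 0 2 j := by
    intro i j hi hj s
    have hd : ∀ s : ℝ, HasDerivAt
        (fun s => F s 0 i * F s 0 j + F s 1 i * F s 1 j + F s 2 i * F s 2 j) 0 s := by
      intro s
      have hd' := (((hE 0 i s).mul (hE 0 j s)).add ((hE 1 i s).mul (hE 1 j s))).add
        ((hE 2 i s).mul (hE 2 j s))
      refine hd'.congr_deriv ?_
      simp [mul_apply, hat4, Fin.sum_univ_four, hi s, hj s]
      ring
    exact is_const_of_deriv_eq_zero (fun s => (hd s).differentiableAt)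
      (fun s => (hd s).deriv) s 0
  -- orthogonality at time 0, entrywise
  have hO' : ∀ a b : Fin 3, R₀ 0 a * R₀ 0 b + R₀ 1 a * R₀ 1 b + R₀ 2 a * R₀ 2 b
      = if a = b then (1:ℝ) else 0 := by
    intro a b
    have := congrFun (congrFun hR₀ a) b
    simpa [mul_apply, transpose_apply, Fin.sum_univ_three, one_apply] using this
  have hG00 : ∀ s : ℝ, F s 0 0 * F s 0 0 + F s 1 0 * F s 1 0 + F s 2 0 * F s 2 0 = 1 := by
    intro s
    rw [hq 0 0 hc0 hc0 s, hF0]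
    simpa [homog] using hO' 0 0
  have hG01 : ∀ s : ℝ, F s 0 0 * F s 0 1 + F s 1 0 * F s 1 1 + F s 2 0 * F s 2 1 = 0 := by
    intro s
    rw [hq 0 1 hc0 hc1 s, hF0]
    simpa [homog] using hO' 0 1
  have hG02 : ∀ s : ℝ, F s 0 0 * F s 0 2 + F s 1 0 * F s 1 2 + F s 2 0 * F s 2 2 = 0 := by
    intro s
    rw [hq 0 2 hc0 hc2 s, hF0]
    simpa [homog] using hO' 0 2
  have hG10 : ∀ s : ℝ, F s 0 1 * F s 0 0 + F s 1 1 * F s 1 0 + F s 2 1 * F s 2 0 = 0 := by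
    intro s
    rw [hq 1 0 hc1 hc0 s, hF0]
    simpa [homog] using hO' 1 0
  have hG11 : ∀ s : ℝ, F s 0 1 * F s 0 1 + F s 1 1 * F s 1 1 + F s 2 1 * F s 2 1 = 1 := by
    intro s
    rw [hq 1 1 hc1 hc1 s, hF0]
    simpa [homog] using hO' 1 1
  have hG12 : ∀ s : ℝ, F s 0 1 * F s 0 2 + F s 1 1 * F s 1 2 + F s 2 1 * F s 2 2 = 0 := by
    intro s
    rw [hq 1 2 hc1 hc2 s, hF0]
    simpa [homog] using hO' 1 2
  have hG20 : ∀ s : ℝ, F s 0 2 * F s 0 0 + F s 1 2 * F s 1 0 + F s 2 2 * F s 2 0 = 0 := by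
    intro s
    rw [hq 2 0 hc2 hc0 s, hF0]
    simpa [homog] using hO' 2 0
  have hG21 : ∀ s : ℝ, F s 0 2 * F s 0 1 + F s 1 2 * F s 1 1 + F s 2 2 * F s 2 1 = 0 := by
    intro s
    rw [hq 2 1 hc2 hc1 s, hF0]
    simpa [homog] using hO' 2 1
  have hG22 : ∀ s : ℝ, F s 0 2 * F s 0 2 + F s 1 2 * F s 1 2 + F s 2 2 * F s 2 2 = 1 := by
    intro s
    rw [hq 2 2 hc2 hc2 s, hF0]
    simpa [homog] using hO' 2 2
  set M : ℝ → Matrix (Fin 3) (Fin 3) ℝ := fun s =>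
    !![F s 0 0, F s 0 1, F s 0 2; F s 1 0, F s 1 1, F s 1 2; F s 2 0, F s 2 1, F s 2 2]
    with hM
  have hMorth : ∀ s, (M s)ᵀ * M s = 1 := by
    intro s
    ext i j
    fin_cases i <;> fin_cases j <;>
      simp [hM, mul_apply, Fin.sum_univ_three, Matrix.vecHead, Matrix.vecTail, one_apply] <;>
      [linarith [hG00 s]; linarith [hG01 s]; linarith [hG02 s];
       linarith [hG10 s]; linarith [hG11 s]; linarith [hG12 s];
       linarith [hG20 s]; linarith [hG21 s]; linarith [hG22 s]]
  -- determinant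
  have hcont : ∀ a b : Fin 4, Continuous fun s => F s a b := by
    intro a b
    exact (continuous_apply b).comp ((continuous_apply a).comp hF.continuous)
  have hMcont : Continuous M := by
    apply continuous_matrix
    intro i j
    fin_cases i <;> fin_cases j <;>
      simp only [hM, Matrix.cons_val', Matrix.cons_val_zero, Matrix.cons_val_one,
        Matrix.head_cons, Matrix.empty_val', Matrix.cons_val_fin_one, Matrix.cons_val_two,
        Matrix.tail_cons] <;>
      exact hcont _ _
  have hdcont : Continuous fun s => (M s).det := hMcont.matrix_det
  have hsq : ∀ s, (M s).det * (M s).det = 1 := by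
    intro s
    have h := congrArg Matrix.det (hMorth s)
    rwa [det_mul, det_transpose, det_one] at h
  have hM0 : M 0 = R₀ := by
    ext i j
    fin_cases i <;> fin_cases j <;> rw [hM] <;> simp [hF0, homog]
  have hd0 : (M 0).det = 1 := by rw [hM0]; exact hdet₀
  have hdet : ∀ t, (M t).det = 1 := by
    intro t
    rcases mul_self_eq_one_iff.mp (hsq t) with h | h
    · exact h
    · exfalso
      have hIvt : Set.uIcc ((M 0).det) ((M t).det)
          ⊆ (fun s => (M s).det) '' Set.uIcc 0 t :=
        intermediate_value_uIcc hdcont.continuousOn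
      have h0mem : (0:ℝ) ∈ Set.uIcc ((M 0).det) ((M t).det) := by
        rw [hd0, h]
        exact Set.mem_uIcc.mpr (Or.inr ⟨by norm_num, by norm_num⟩)
      obtain ⟨s, _, hs⟩ := hIvt h0mem
      have hs' : (M s).det = 0 := hs
      have := hsq s
      rw [hs'] at this
      norm_num at this
  -- conclude
  intro t
  refine ⟨M t, ![F t 0 3, F t 1 3, F t 2 3], hMorth t, hdet t, ?_⟩
  ext i j
  fin_cases i <;> fin_cases j <;>
    simp [homog, hM, hc0 t, hc1 t, hc2 t, hc3 t]
end
end
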